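/- arXiv:1808.09836 — 2 statements merged into one kernel-verified Lean document; each statement's English description precedes it below -/
import Mathlib

section
/- Let (P, ≺) be a generalised path. Then between any two vertices v ≺ w of P there exists a finite path in the graph P from v to w whose vertices are strictly increasing with respect to ≺. -/
/-!
Induct on `w` along the well-order. For `v ⪯ w` with `v ≠ w`, cofinality gives a neighbour `u ≺ w`
of `w` with `v ⪯ u`, and a `≺`-decreasing walk from `u` to `v` extends by the edge `wu`. Reversing
gives an increasing walk, which is a path because `≺` is a strict order.
-/

open Cardinal

universe u

/-- A generalised path structure on the whole vertex set of `G`: a well-order `r`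
such that every vertex's down-neighbours are cofinal below it. -/
def IsGenPath {V : Type*} (G : SimpleGraph V) (r : V → V → Prop) : Prop :=
  IsWellOrder V r ∧ ∀ v v' : V, r v' v → ∃ w : V, G.Adj v w ∧ r w v ∧ ¬ r w v'

/-- A generalised path in `G` with vertex set `S` and path order `r`. -/
def IsGenPathRel {V : Type*} (G : SimpleGraph V) (S : Set V) (r : S → S → Prop) : Prop :=
  IsWellOrder S r ∧
    ∀ v v' : S, r v' v → ∃ w : S, G.Adj (v : V) (w : V) ∧ r w v ∧ ¬ r w v'

open Classical in
noncomputable def relType {α : Type u} (r : α → α → Prop) : Ordinal.{u} :=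
  if h : IsWellOrder α r then @Ordinal.type α r h else 0

/-- `v` is a limit element of the order `r` : neither minimal nor a successor. -/
def IsLimitElem {α : Type*} (r : α → α → Prop) (v : α) : Prop :=
  (∃ w, r w v) ∧ ∀ w, r w v → ∃ u, r w u ∧ r u v

/-- The set of limit elements of a path order on `S`, as a subset of the ambient vertex set. -/
def LimitSet {V : Type*} (S : Set V) (r : S → S → Prop) : Set V :=
  {v | ∃ h : v ∈ S, IsLimitElem r ⟨v, h⟩}

/-- `A` is `κ`-star-linked in `B`: every finite subset of `A` has common
neighbourhood of cardinality `κ` inside `B`. -/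
def StarLinked {V : Type*} (G : SimpleGraph V) (κ : Cardinal) (A B : Set V) : Prop :=
  ∀ F : Finset V, ↑F ⊆ A → #{b : V | b ∈ B ∧ ∀ v ∈ F, G.Adj v b} = κ

/-- The spanning subgraph of `G` consisting of the edges of colour `i`. -/
def colourSub {V : Type*} (G : SimpleGraph V) {n : ℕ} (c : V → V → Fin n) (i : Fin n) :
    SimpleGraph V where
  Adj u v := G.Adj u v ∧ c u v = i ∧ c v u = i
  symm := ⟨by rintro u v ⟨h, h1, h2⟩; exact ⟨h.symm, h2, h1⟩⟩
  loopless := ⟨by rintro v ⟨h, -⟩; exact G.loopless.irrefl v h⟩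

/-- `A` is `κ`-star-linked in `B` in colour `i`. -/
def StarLinkedC {V : Type*} (G : SimpleGraph V) {n : ℕ} (c : V → V → Fin n) (i : Fin n)
    (κ : Cardinal) (A B : Set V) : Prop :=
  StarLinked (colourSub G c i) κ A B

/-- `G` is a graph of type `H_{κ,κ}` with main class `A` and second class `B`. -/
def IsTypeH {V : Type u} (κ : Cardinal.{u}) (G : SimpleGraph V) (A B : Set V) : Prop :=
  A ∪ B = Set.univ ∧
    ∃ (ι : Type u) (_ : LinearOrder ι) (a b : ι → V),
      relType ((· < ·) : ι → ι → Prop) = κ.ord ∧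
      A = Set.range a ∧ B = Set.range b ∧
      ∀ ξ ζ : ι, ξ ≤ ζ → a ξ ≠ b ζ → G.Adj (a ξ) (b ζ)

/-- `U` is `<κ`-inseparable in `H`: no two of its vertices can be separated by
deleting fewer than `κ` vertices. -/
def Insep {V : Type*} (κ : Cardinal) (H : SimpleGraph V) (U : Set V) : Prop :=
  ∀ u ∈ U, ∀ v ∈ U, u ≠ v → ∀ W : Set V, #W < κ →
    ∀ (hu : u ∉ W) (hv : v ∉ W), (H.induce Wᶜ).Reachable ⟨u, hu⟩ ⟨v, hv⟩

/-- The bipartite subgraph of `G` consisting of the edges between `S` and `T`. -/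
def between {V : Type*} (G : SimpleGraph V) (S T : Set V) : SimpleGraph V where
  Adj u v := G.Adj u v ∧ ((u ∈ S ∧ v ∈ T) ∨ (u ∈ T ∧ v ∈ S))
  symm := ⟨by rintro u v ⟨h, h'⟩; exact ⟨h.symm, h'.symm.imp And.symm And.symm⟩⟩
  loopless := ⟨by rintro v ⟨h, -⟩; exact G.loopless.irrefl v h⟩

theorem SimpleGraph.Walk.isPath_of_isChain_support {V : Type*} {G : SimpleGraph V}
    {r : V → V → Prop} [IsStrictOrder V r] {u v : V} (p : G.Walk u v)
    (h : List.IsChain r p.support) : p.IsPath :=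
  IsPath.mk' (List.isChain_iff_pairwise.mp h).nodup

theorem IsGenPath.exists_walk_isChain_support {V : Type*} {G : SimpleGraph V}
    {r : V → V → Prop} (hP : IsGenPath G r) {v w : V} (hwv : ¬ r w v) :
    ∃ p : G.Walk w v, List.IsChain (fun a b => r b a) p.support := by
  obtain ⟨hwo, hcof⟩ := hP
  induction w using hwo.wf.induction generalizing v with
  | _ w ih =>
    rcases eq_or_ne v w with rfl | hne
    · exact ⟨.nil, by simp⟩
    have hvw : r v w := (trichotomous_of r v w).resolve_right (not_or.mpr ⟨hne, hwv⟩)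
    obtain ⟨u, hadj, huw, huv⟩ := hcof w v hvw
    obtain ⟨p, hp⟩ := ih u huw huv
    refine ⟨.cons hadj p, List.isChain_cons.mpr ⟨?_, hp⟩⟩
    cases p <;> simpa using huw

/-- between any two vertices `v ≺ w` of a generalised path there is a
finite path from `v` to `w` strictly increasing with respect to `≺`. -/
theorem stmt1 {V : Type*} (G : SimpleGraph V) (r : V → V → Prop)
    (hP : IsGenPath G r) (v w : V) (hvw : r v w) :
    ∃ p : G.Walk v w, p.IsPath ∧ List.Chain' r p.support := by
  have : IsWellOrder V r := hP.1
  obtain ⟨p, hp⟩ := hP.exists_walk_isChain_support (asymm hvw)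
  have hchain : List.IsChain r p.reverse.support := by
    rwa [SimpleGraph.Walk.support_reverse, List.isChain_reverse]
  exact ⟨p.reverse, p.reverse.isPath_of_isChain_support hchain, hchain⟩
end

section
/- Let (P, ≺) be a generalised path. If (P, ≺) has order type ω and v ∈ V(P) is not the first vertex, and P − v contains a spanning ray starting at the first vertex of P, then P is {v}-robust. -/
open Cardinal

universe u

/-- simplified form: if `(P, ≺)` is a generalised path of order type
`ω`, `v` is not its first vertex, and `P − v` has a spanning ray starting at the
first vertex of `P`, then `P` is `{v}`-robust. -/
theorem stmt19 {V : Type u} (G : SimpleGraph V) (r : V → V → Prop)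
    (hP : IsGenPath G r) (hty : relType r = Ordinal.omega0.{u})
    (v0 : V) (hv0 : ∀ u, ¬ r u v0)
    (v : V) (hv : v ≠ v0)
    (hray : ∃ g : ℕ → V, Function.Injective g ∧ g 0 = v0 ∧
      Set.range g = {v}ᶜ ∧ ∀ n, G.Adj (g n) (g (n + 1))) :
    ∀ X' ⊆ ({v} : Set V), ∃ r' : ↥(X'ᶜ) → ↥(X'ᶜ) → Prop,
      IsGenPathRel G X'ᶜ r' ∧ relType r' = Ordinal.omega0.{u} := by
  obtain ⟨g, hginj, hg0, hgrange, hgadj⟩ := hray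
  intro X' hX'
  by_cases hvX : v ∈ X'
  · -- X' = {v}, use the ray
    have hXeq : X' = {v} := Set.Subset.antisymm hX' (by simpa using hvX)
    subst hXeq
    have hmem : ∀ n, g n ∈ ({v} : Set V)ᶜ := fun n => by
      rw [← hgrange]; exact ⟨n, rfl⟩
    have hsurj : ∀ x : ↥(({v} : Set V)ᶜ), ∃ n, g n = (x : V) := by
      intro x
      have : (x : V) ∈ Set.range g := by rw [hgrange]; exact x.2
      exact this
    let e : ℕ ≃ ↥(({v} : Set V)ᶜ) := Equiv.ofBijective (fun n => ⟨g n, hmem n⟩)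
      ⟨fun a b h => hginj (congrArg Subtype.val h),
       fun x => by obtain ⟨n, hn⟩ := hsurj x; exact ⟨n, Subtype.ext hn⟩⟩
    refine ⟨fun a b => e.symm a < e.symm b, ⟨?_, ?_⟩, ?_⟩
    · exact RelIso.IsWellOrder.preimage ((· < ·) : ℕ → ℕ → Prop) e.symm
    · intro a b hba
      rcases Nat.exists_eq_add_of_lt hba with ⟨k, hk⟩
      set n := e.symm a with hn
      have hn1 : 1 ≤ n := Nat.one_le_iff_ne_zero.2 (by omega)
      obtain ⟨m, hm⟩ : ∃ m, n = m + 1 := ⟨n - 1, by omega⟩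
      refine ⟨e m, ?_, ?_, ?_⟩
      · have ha : (a : V) = g n := by
          conv_lhs => rw [← e.apply_symm_apply a]
          rfl
        have hem : ((e m : ↥(({v} : Set V)ᶜ)) : V) = g m := rfl
        rw [ha, hem, hm]
        exact (hgadj m).symm
      · show e.symm (e m) < e.symm a
        rw [e.symm_apply_apply]; omega
      · show ¬ e.symm (e m) < e.symm b
        rw [e.symm_apply_apply]; omega
    · have hwo : IsWellOrder _ (fun a b : ↥(({v} : Set V)ᶜ) => e.symm a < e.symm b) :=
        RelIso.IsWellOrder.preimage ((· < ·) : ℕ → ℕ → Prop) e.symm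
      rw [relType, dif_pos hwo]
      have : (fun a b : ↥(({v} : Set V)ᶜ) => e.symm a < e.symm b) =
          (e.symm ⁻¹'o ((· < ·) : ℕ → ℕ → Prop)) := rfl
      have h1 : Ordinal.lift.{0} (@Ordinal.type _ _ hwo) =
          Ordinal.lift.{u} (@Ordinal.type ℕ (· < ·) _) := by
        exact (RelIso.preimage e.symm ((· < ·) : ℕ → ℕ → Prop)).ordinal_lift_type_eq
      rw [Ordinal.lift_id'] at h1
      rw [h1]; rfl
  · -- X' = ∅, reuse r
    have hXeq : X' = ∅ := by
      ext x
      simp only [Set.mem_empty_iff_false, iff_false]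
      intro hx
      exact hvX (hX' hx ▸ hx)
    subst hXeq
    have hmem : ∀ x : V, x ∈ (∅ : Set V)ᶜ := fun x => Set.mem_compl (by simp)
    let e : ↥((∅ : Set V)ᶜ) ≃ V := Equiv.subtypeUnivEquiv hmem
    have hwoV : IsWellOrder V r := hP.1
    refine ⟨fun a b => r a.1 b.1, ⟨?_, ?_⟩, ?_⟩
    · exact RelIso.IsWellOrder.preimage r e
    · intro a b hba
      obtain ⟨w, hw1, hw2, hw3⟩ := hP.2 a.1 b.1 hba
      exact ⟨⟨w, hmem w⟩, hw1, hw2, hw3⟩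
    · have hwo : IsWellOrder _ (fun a b : ↥((∅ : Set V)ᶜ) => r a.1 b.1) :=
        RelIso.IsWellOrder.preimage r e
      rw [relType, dif_pos hwo]
      rw [relType, dif_pos hwoV] at hty
      rw [← hty]
      exact (RelIso.preimage e r).ordinal_type_eq
end
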